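/- Let α ≥ 0. There exists C > 0 such that for every compactly supported C¹ function g : ℝ → ℝ, ‖⟨·⟩^{(4/3)α} g‖_{L^∞}^6 ≤ C ‖⟨·⟩^{2α} g‖_{L¹}^2 ‖⟨·⟩^α g'‖_{L²}^4. -/

import Mathlib

open MeasureTheory Real

noncomputable abbrev ww (y : ℝ) : ℝ := Real.sqrt (1 + y^2)

lemma ww_pos (y : ℝ) : 0 < ww y := Real.sqrt_pos.2 (by positivity)

lemma ww_one_le (y : ℝ) : 1 ≤ ww y := by
  rw [show (1:ℝ) = Real.sqrt 1 by simp]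
  exact Real.sqrt_le_sqrt (by nlinarith [sq_nonneg y])

lemma ww_cont : Continuous ww := by
  exact (continuous_const.add (continuous_pow 2)).sqrt

lemma wwc_cont (c : ℝ) : Continuous (fun y => ww y ^ c) :=
  ww_cont.rpow_const (fun y => Or.inl (ww_pos y).ne')

lemma ww_mono {c x y : ℝ} (hc : 0 ≤ c) (h : |x| ≤ |y|) : ww x ^ c ≤ ww y ^ c := by
  apply Real.rpow_le_rpow (ww_pos x).le _ hc
  apply Real.sqrt_le_sqrt
  nlinarith [abs_nonneg x, sq_abs x, sq_abs y]

lemma aux_int {c : ℝ} {φ : ℝ → ℝ} (hφ : Continuous φ) (hφs : HasCompactSupport φ) :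
    Integrable (fun y => ww y ^ c * φ y) := by
  apply Continuous.integrable_of_hasCompactSupport ((wwc_cont c).mul hφ)
  exact hφs.mul_left

lemma my_cs {f u : ℝ → ℝ} (hf2 : Integrable (fun y => f y ^ 2))
    (hu2 : Integrable (fun y => u y ^ 2)) (hfu : Integrable (fun y => f y * u y)) :
    (∫ y, f y * u y) ^ 2 ≤ (∫ y, f y ^ 2) * (∫ y, u y ^ 2) := by
  set A := ∫ y, f y ^ 2
  set B := ∫ y, f y * u y
  set C := ∫ y, u y ^ 2
  have key : ∀ t : ℝ, 0 ≤ A * (t * t) + (2 * B) * t + C := by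
    intro t
    have h0 : 0 ≤ ∫ y, (t * f y + u y) ^ 2 := integral_nonneg fun y => sq_nonneg _
    have heq : ∫ y, (t * f y + u y) ^ 2 = A * (t * t) + (2 * B) * t + C := by
      have : ∀ y, (t * f y + u y) ^ 2
          = (t * t) * f y ^ 2 + (2 * t) * (f y * u y) + u y ^ 2 := by intro y; ring
      simp_rw [this]
      rw [integral_add, integral_add, integral_const_mul, integral_const_mul]
      · ring
      · exact hf2.const_mul _
      · exact hfu.const_mul _
      · exact (hf2.const_mul _).add (hfu.const_mul _)
      · exact hu2
    linarith [heq ▸ h0]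
  have := discrim_le_zero key
  rw [discrim] at this
  nlinarith

lemma nash_pt {β : ℝ} (hβ : 0 ≤ β) {g : ℝ → ℝ} (hg : ContDiff ℝ 1 g)
    (hgs : HasCompactSupport g) (x : ℝ) :
    ww x ^ β * g x ^ 2 ≤ 2 * ∫ y, ww y ^ β * |g y * deriv g y| := by
  have hgc : Continuous g := hg.continuous
  have hg' : Continuous (deriv g) := hg.continuous_deriv le_rfl
  have hd : ∀ y : ℝ, HasDerivAt (fun z => g z ^ 2) (2 * g y * deriv g y) y := by
    intro y
    have h1 := ((hg.differentiable one_ne_zero) y).hasDerivAt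
    have := h1.pow 2
    exact this.congr_deriv (by simp)
  have habs : HasCompactSupport (fun y => |g y * deriv g y|) := (hgs.mul_right).abs
  have hca : Continuous (fun y => |g y * deriv g y|) := (hgc.mul hg').abs
  have intJ : Integrable (fun y => ww y ^ β * |g y * deriv g y|) := aux_int hca habs
  have hwnn : ∀ y : ℝ, (0:ℝ) ≤ ww y ^ β := fun y => Real.rpow_nonneg (ww_pos y).le _
  have Jnn : ∀ y : ℝ, 0 ≤ 2 * (ww y ^ β * |g y * deriv g y|) := fun y => by
    have := hwnn y; have := abs_nonneg (g y * deriv g y); nlinarith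
  obtain ⟨R, hR⟩ := hgs.isBounded.subset_closedBall 0
  have hzero : ∀ y : ℝ, R + 1 ≤ |y| → g y = 0 := by
    intro y hy
    apply image_eq_zero_of_notMem_tsupport
    intro hmem
    have := hR hmem
    simp [Metric.mem_closedBall, Real.dist_eq] at this
    linarith
  have hcont2 : Continuous (fun y => 2 * g y * deriv g y) :=
    (continuous_const.mul hgc).mul hg'
  have hcontJ : Continuous (fun y => 2 * (ww y ^ β * |g y * deriv g y|)) :=
    continuous_const.mul ((wwc_cont β).mul hca)
  have tail : ∀ (a b : ℝ), a ≤ b →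
      (∫ y in a..b, 2 * (ww y ^ β * |g y * deriv g y|))
        ≤ 2 * ∫ y, ww y ^ β * |g y * deriv g y| := by
    intro a b hab
    rw [intervalIntegral.integral_of_le hab]
    calc (∫ y in Set.Ioc a b, 2 * (ww y ^ β * |g y * deriv g y|))
        ≤ ∫ y, 2 * (ww y ^ β * |g y * deriv g y|) :=
          setIntegral_le_integral (intJ.const_mul 2) (ae_of_all _ Jnn)
      _ = 2 * ∫ y, ww y ^ β * |g y * deriv g y| := integral_const_mul 2 _
  rcases le_total 0 x with hx | hx
  · set T : ℝ := max x R + 1 with hT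
    have hxT : x ≤ T := by have := le_max_left x R; linarith
    have hgT : g T = 0 := by
      apply hzero
      rw [abs_of_nonneg (by linarith)]
      have := le_max_right x R; linarith
    have hftc : (∫ y in x..T, 2 * g y * deriv g y) = g T ^ 2 - g x ^ 2 :=
      intervalIntegral.integral_eq_sub_of_hasDerivAt (fun y _ => hd y)
        (hcont2.intervalIntegrable x T)
    calc ww x ^ β * g x ^ 2
        = ∫ y in x..T, ww x ^ β * -(2 * g y * deriv g y) := by
          rw [intervalIntegral.integral_const_mul, intervalIntegral.integral_neg, hftc, hgT]
          ring
      _ ≤ ∫ y in x..T, 2 * (ww y ^ β * |g y * deriv g y|) := by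
          apply intervalIntegral.integral_mono_on hxT
            ((continuous_const.mul hcont2.neg).intervalIntegrable x T)
            (hcontJ.intervalIntegrable x T)
          intro y hy
          have h1 : |x| ≤ |y| := by
            rw [abs_of_nonneg hx, abs_of_nonneg (le_trans hx hy.1)]; exact hy.1
          have h2 := ww_mono hβ h1
          have h3 : -(2 * g y * deriv g y) ≤ 2 * |g y * deriv g y| := by
            have := neg_abs_le (g y * deriv g y)
            have := neg_le_abs (g y * deriv g y)
            nlinarith [abs_nonneg (g y * deriv g y)]
          calc ww x ^ β * -(2 * g y * deriv g y)
              ≤ ww x ^ β * (2 * |g y * deriv g y|) :=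
                mul_le_mul_of_nonneg_left h3 (hwnn x)
            _ ≤ ww y ^ β * (2 * |g y * deriv g y|) :=
                mul_le_mul_of_nonneg_right h2 (by positivity)
            _ = 2 * (ww y ^ β * |g y * deriv g y|) := by ring
      _ ≤ 2 * ∫ y, ww y ^ β * |g y * deriv g y| := tail x T hxT
  · set T : ℝ := min x (-R) - 1 with hT
    have hxT : T ≤ x := by have := min_le_left x (-R); linarith
    have hgT : g T = 0 := by
      apply hzero
      have hTneg : T ≤ -R - 1 := by have := min_le_right x (-R); linarith
      rw [abs_of_nonpos (by linarith)]
      linarith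
    have hftc : (∫ y in T..x, 2 * g y * deriv g y) = g x ^ 2 - g T ^ 2 :=
      intervalIntegral.integral_eq_sub_of_hasDerivAt (fun y _ => hd y)
        (hcont2.intervalIntegrable T x)
    calc ww x ^ β * g x ^ 2
        = ∫ y in T..x, ww x ^ β * (2 * g y * deriv g y) := by
          rw [intervalIntegral.integral_const_mul, hftc, hgT]
          ring
      _ ≤ ∫ y in T..x, 2 * (ww y ^ β * |g y * deriv g y|) := by
          apply intervalIntegral.integral_mono_on hxT
            ((continuous_const.mul hcont2).intervalIntegrable T x)
            (hcontJ.intervalIntegrable T x)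
          intro y hy
          have h1 : |x| ≤ |y| := by
            rw [abs_of_nonpos hx, abs_of_nonpos (le_trans hy.2 hx)]; linarith [hy.2]
          have h2 := ww_mono hβ h1
          have h3 : 2 * g y * deriv g y ≤ 2 * |g y * deriv g y| := by
            have := le_abs_self (g y * deriv g y)
            nlinarith [abs_nonneg (g y * deriv g y)]
          calc ww x ^ β * (2 * g y * deriv g y)
              ≤ ww x ^ β * (2 * |g y * deriv g y|) :=
                mul_le_mul_of_nonneg_left h3 (hwnn x)
            _ ≤ ww y ^ β * (2 * |g y * deriv g y|) :=
                mul_le_mul_of_nonneg_right h2 (by positivity)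
            _ = 2 * (ww y ^ β * |g y * deriv g y|) := by ring
      _ ≤ 2 * ∫ y, ww y ^ β * |g y * deriv g y| := tail T x hxT

lemma ww_sq (y c : ℝ) : (ww y ^ c)^2 = ww y ^ (2*c) := by
  rw [sq, ← Real.rpow_add (ww_pos y)]; congr 1; ring

lemma hcs_sq {f : ℝ → ℝ} (hf : HasCompactSupport f) :
    HasCompactSupport (fun y => f y ^ 2) := by
  have := hf.mul_right (f' := f)
  simp only [sq]
  exact this

theorem stmt3 (α : ℝ) (hα : 0 ≤ α) :
    ∃ C > 0, ∀ g : ℝ → ℝ, ContDiff ℝ 1 g → HasCompactSupport g → ∀ x : ℝ,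
      (Real.sqrt (1 + x^2) ^ ((4/3)*α) * |g x|)^6 ≤
        C * (∫ y : ℝ, Real.sqrt (1 + y^2) ^ (2*α) * |g y|)^2 *
          (∫ y : ℝ, (Real.sqrt (1 + y^2) ^ α * deriv g y)^2)^2 := by
  refine ⟨16, by norm_num, ?_⟩
  intro g hg hgs x
  have hgc : Continuous g := hg.continuous
  have hg' : Continuous (deriv g) := hg.continuous_deriv le_rfl
  have hg's : HasCompactSupport (deriv g) := hgs.deriv
  have hwnn : ∀ (y c : ℝ), (0:ℝ) ≤ ww y ^ c := fun y c => Real.rpow_nonneg (ww_pos y).le _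
  set h : ℝ → ℝ := fun y => ww y ^ ((4/3)*α) * |g y| with hh
  have hcont_h : Continuous h := (wwc_cont _).mul hgc.abs
  have hsupp_h : HasCompactSupport h := hgs.abs.mul_left
  obtain ⟨x₀, hx₀⟩ := hcont_h.exists_forall_ge_of_hasCompactSupport hsupp_h
  set M : ℝ := h x₀ with hM
  have hM0 : 0 ≤ M := mul_nonneg (hwnn x₀ _) (abs_nonneg _)
  set S : ℝ := ∫ y : ℝ, (Real.sqrt (1 + y^2) ^ α * deriv g y)^2 with hS
  set A : ℝ := ∫ y : ℝ, Real.sqrt (1 + y^2) ^ (2*α) * |g y| with hA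
  set J : ℝ := ∫ y : ℝ, ww y ^ ((8/3)*α) * |g y * deriv g y| with hJ
  set I : ℝ := ∫ y : ℝ, ww y ^ ((10/3)*α) * (g y * g y) with hI
  have hA0 : 0 ≤ A := integral_nonneg fun y => mul_nonneg (hwnn y _) (abs_nonneg _)
  have hS0 : 0 ≤ S := integral_nonneg fun y => sq_nonneg _
  have hJ0 : 0 ≤ J := integral_nonneg fun y => mul_nonneg (hwnn y _) (abs_nonneg _)
  -- Step 1 : M^2 ≤ 2 J
  have step1 : M ^ 2 ≤ 2 * J := by
    have h1 := nash_pt (β := (8/3)*α) (by positivity) hg hgs x₀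
    have h2 : M ^ 2 = ww x₀ ^ ((8/3)*α) * g x₀ ^ 2 := by
      rw [hM, hh]
      rw [mul_pow, sq_abs, ww_sq, show (2:ℝ) * (4/3*α) = 8/3*α by ring]
    rw [h2]
    exact h1
  -- Step 2 : J^2 ≤ S * I
  have step2 : J ^ 2 ≤ S * I := by
    set f : ℝ → ℝ := fun y => ww y ^ α * |deriv g y| with hf
    set u : ℝ → ℝ := fun y => ww y ^ ((5/3)*α) * |g y| with hu
    have hfc : Continuous f := (wwc_cont _).mul hg'.abs
    have huc : Continuous u := (wwc_cont _).mul hgc.abs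
    have hfs : HasCompactSupport f := hg's.abs.mul_left
    have hus : HasCompactSupport u := hgs.abs.mul_left
    have hJeq : J = ∫ y : ℝ, f y * u y := by
      rw [hJ]
      congr 1
      funext y
      rw [hf, hu, abs_mul,
        show ((8:ℝ)/3)*α = α + (5/3)*α by ring, Real.rpow_add (ww_pos y)]
      ring
    have hfeq : (∫ y : ℝ, f y ^ 2) = S := by
      rw [hS]
      congr 1
      funext y
      rw [hf, mul_pow, mul_pow, sq_abs]
    have hueq : (∫ y : ℝ, u y ^ 2) = I := by
      rw [hI]
      congr 1
      funext y
      rw [hu, mul_pow, sq_abs, ww_sq, show (2:ℝ) * (5/3*α) = 10/3*α by ring, sq]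
    have if2 : Integrable (fun y => f y ^ 2) :=
      (hfc.pow 2).integrable_of_hasCompactSupport (hcs_sq hfs)
    have iu2 : Integrable (fun y => u y ^ 2) :=
      (huc.pow 2).integrable_of_hasCompactSupport (hcs_sq hus)
    have ifu : Integrable (fun y => f y * u y) :=
      (hfc.mul huc).integrable_of_hasCompactSupport (hus.mul_left)
    have hcs := my_cs if2 iu2 ifu
    rw [hJeq, ← hfeq, ← hueq]
    exact hcs
  -- Step 3 : I ≤ M * A
  have step3 : I ≤ M * A := by
    have intI : Integrable (fun y => ww y ^ ((10/3)*α) * (g y * g y)) :=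
      aux_int (hgc.mul hgc) (hgs.mul_right)
    have intA : Integrable (fun y => ww y ^ (2*α) * |g y|) := aux_int hgc.abs hgs.abs
    have key : M * A = ∫ y : ℝ, M * (ww y ^ (2*α) * |g y|) := (integral_const_mul M _).symm
    rw [hI, key]
    apply integral_mono intI (intA.const_mul M)
    intro y
    have hsplit : ww y ^ ((10/3)*α) * (g y * g y)
        = h y * (ww y ^ (2*α) * |g y|) := by
      rw [hh]
      rw [show ((10:ℝ)/3)*α = 4/3*α + 2*α by ring, Real.rpow_add (ww_pos y),
        ← abs_mul_abs_self (g y)]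
      ring
    show ww y ^ ((10/3)*α) * (g y * g y) ≤ M * (ww y ^ (2*α) * |g y|)
    rw [hsplit]
    exact mul_le_mul_of_nonneg_right (hx₀ y) (mul_nonneg (hwnn y _) (abs_nonneg _))
  -- combine
  have ht0 : 0 ≤ h x := mul_nonneg (hwnn x _) (abs_nonneg _)
  have htM : h x ≤ M := hx₀ x
  show (h x)^6 ≤ 16 * A^2 * S^2
  · have e1 : M^4 ≤ 4 * (S * (M * A)) := by
      have p1 : (M^2)^2 ≤ (2*J)^2 := pow_le_pow_left₀ (sq_nonneg M) step1 2
      have p3 : S * I ≤ S * (M * A) := mul_le_mul_of_nonneg_left step3 hS0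
      nlinarith [step2]
    rcases eq_or_lt_of_le hM0 with hMz | hMpos
    · have hx0 : h x = 0 := le_antisymm (hMz ▸ htM) ht0
      rw [hx0]
      have : (0:ℝ)^6 = 0 := by norm_num
      rw [this]
      have : (0:ℝ) ≤ 16 * A^2 * S^2 :=
        mul_nonneg (mul_nonneg (by norm_num) (sq_nonneg A)) (sq_nonneg S)
      exact this
    · have hM3 : M^3 ≤ 4 * S * A := by
        have : M^3 * M ≤ (4 * S * A) * M := by nlinarith [e1]
        exact le_of_mul_le_mul_right this hMpos
      have p4 : (h x)^6 ≤ M^6 := pow_le_pow_left₀ ht0 htM 6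
      have p5 : M^6 ≤ 16 * A^2 * S^2 := by nlinarith [mul_self_le_mul_self (pow_nonneg hM0 3) hM3]
      linarith
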